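/- arXiv:1308.3790 — 6 statements merged into one kernel-verified Lean document; each statement's English description precedes it below -/
import Mathlib

section
/- Let U and V_n (n ∈ ℕ) be pairwise non-isomorphic selective ultrafilters on ℕ. Then there is a set X ∈ U-∑_n V_n on which the second projection π₂ is one-to-one. -/
/-!
Selective ultrafilters are P-points, and countably many distinct P-points can be separated by
almost disjoint sets `B n ∈ V n`: take `D m ∈ V m` almost contained in a set separating `V m`
from each `V n`, and cut `D n` down by the complements of the separating sets of the earlier
`V m`. Disjointifying the `B n` costs finitely many points of each `B n`, which is harmless
for the nonprincipal `V n`; at most one `V n` is principal, since two principal ultrafilters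
are isomorphic, so for nonprincipal `U` the nonprincipal indices form a `U`-large set.
Over that set, the union of the fibres `{n} × (disjointed B n)` is the required `X`.
-/

/-- The `U`-indexed sum of the ultrafilters `V n`: a set `X ⊆ ℕ × ℕ` belongs to the sum
iff `{n | X(n) ∈ V n} ∈ U`, where `X(n)` is the `n`-th vertical section of `X`. -/
def sumUF (U : Ultrafilter ℕ) (V : ℕ → Ultrafilter ℕ) : Ultrafilter (ℕ × ℕ) :=
  U.bind fun n => (V n).map fun m => (n, m)

/-- `U` is selective: for every `f : ℕ → ℕ` there is `A ∈ U` on which `f` is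
one-to-one or constant. -/
def IsSelective (U : Ultrafilter ℕ) : Prop :=
  ∀ f : ℕ → ℕ, ∃ A ∈ U, Set.InjOn f A ∨ ∃ c, ∀ a ∈ A, f a = c

/-- Two ultrafilters on ℕ are (RK-)isomorphic iff a bijection of ℕ carries one to the other. -/
def RKIso (U V : Ultrafilter ℕ) : Prop :=
  ∃ e : ℕ ≃ ℕ, Ultrafilter.map (⇑e) U = V

open Filter Set

lemma mem_sumUF {U : Ultrafilter ℕ} {V : ℕ → Ultrafilter ℕ} {X : Set (ℕ × ℕ)} :
    X ∈ sumUF U V ↔ {n | Prod.mk n ⁻¹' X ∈ V n} ∈ U := by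
  show X ∈ (U : Filter ℕ).bind (fun n => map (Prod.mk n) (V n)) ↔ _
  rw [mem_bind']
  rfl

lemma exists_mem_sumUF_injOn_snd {U : Ultrafilter ℕ} {V : ℕ → Ultrafilter ℕ} {I : Set ℕ}
    (hI : I ∈ U) {C : ℕ → Set ℕ} (hC : ∀ n ∈ I, C n ∈ V n) (hdisj : I.PairwiseDisjoint C) :
    ∃ X ∈ sumUF U V, InjOn Prod.snd X := by
  refine ⟨{p | p.1 ∈ I ∧ p.2 ∈ C p.1}, ?_, ?_⟩
  · exact mem_sumUF.2 <| mem_of_superset hI fun n hn =>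
      mem_of_superset (hC n hn) fun m hm => ⟨hn, hm⟩
  · rintro ⟨i, a⟩ ⟨hi, hai⟩ ⟨j, b⟩ ⟨hj, hbj⟩ (rfl : a = b)
    rw [hdisj.elim_set (i := i) hi hj a hai hbj]

lemma Ultrafilter.exists_mem_compl_mem_of_ne {α : Type*} {V W : Ultrafilter α} (h : V ≠ W) :
    ∃ S ∈ V, Sᶜ ∈ W := by
  by_contra! hVW
  exact h (Ultrafilter.eq_of_le fun S hS => Ultrafilter.compl_notMem_iff.1 (hVW S hS)).symm

def IsPPoint (V : Ultrafilter ℕ) : Prop :=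
  ∀ E : ℕ → Set ℕ, (∀ k, E k ∈ V) → ∃ D ∈ V, ∀ k, (D \ E k).Finite

lemma IsSelective.isPPoint {V : Ultrafilter ℕ} (hsel : IsSelective V) : IsPPoint V := by
  intro E hE
  rcases V.le_cofinite_or_eq_pure with hV | ⟨b, rfl⟩
  swap
  · exact ⟨{b}, mem_singleton b, fun k => (finite_singleton b).subset sdiff_subset⟩
  classical
  have hE' : ∀ k, E k ∩ Ici k ∈ V := fun k =>
    inter_mem (hE k) (hV <| by rw [mem_cofinite, compl_Ici]; exact finite_Iio k)
  have hexit : ∀ x, ∃ k, x ∉ E k ∩ Ici k := fun x => ⟨x + 1, fun hx => by simpa using hx.2⟩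
  -- `f x` is the first `k` with `x ∉ E k ∩ Ici k`; it cannot be constant on a set of `V`,
  -- and where it is injective, `x ∉ E k` forces `f x ≤ k` for only finitely many `x`.
  set f : ℕ → ℕ := fun x => Nat.find (hexit x)
  obtain ⟨A, hA, hinj | ⟨c, hc⟩⟩ := hsel f
  · refine ⟨A, hA, fun k => ?_⟩
    have hsub : A \ E k ⊆ A ∩ f ⁻¹' Iic k := fun x ⟨hxA, hxE⟩ =>
      ⟨hxA, Nat.find_le fun hx => hxE hx.1⟩
    exact (Finite.of_finite_image ((finite_Iic k).subset (image_subset_iff.2 inter_subset_right))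
      (hinj.mono inter_subset_left)).subset hsub
  · obtain ⟨x, hxA, hxE⟩ := Ultrafilter.nonempty_of_mem (inter_mem hA (hE' c))
    have hfx : x ∉ E (f x) ∩ Ici (f x) := Nat.find_spec (hexit x)
    exact (hfx (hc x hxA ▸ hxE)).elim

lemma exists_pairwise_finite_inter {V : ℕ → Ultrafilter ℕ} (hV : ∀ n, IsPPoint (V n))
    (hne : Pairwise fun m n => V m ≠ V n) :
    ∃ B : ℕ → Set ℕ, (∀ n, B n ∈ V n) ∧ Pairwise fun m n => (B m ∩ B n).Finite := by
  have hsep : ∀ m n, ∃ S ∈ V m, m ≠ n → Sᶜ ∈ V n := by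
    intro m n
    by_cases h : m = n
    · exact ⟨univ, univ_mem, fun h' => absurd h h'⟩
    · obtain ⟨S, hS, hSc⟩ := Ultrafilter.exists_mem_compl_mem_of_ne (hne h)
      exact ⟨S, hS, fun _ => hSc⟩
  choose S hSm hSn using hsep
  choose D hD hDS using fun m => hV m (S m) (hSm m)
  set B : ℕ → Set ℕ := fun n => D n ∩ ⋂ m ∈ Iio n, (S m n)ᶜ
  have hB : ∀ n, B n ∈ V n := fun n =>
    inter_mem (hD n) ((biInter_mem (finite_Iio n)).2 fun m hm => hSn m n (ne_of_lt hm))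
  have hlt : ∀ m n, m < n → (B m ∩ B n).Finite := fun m n hmn =>
    (hDS m n).subset fun x ⟨hxm, hxn⟩ => ⟨hxm.1, mem_iInter₂.1 hxn.2 m hmn⟩
  refine ⟨B, hB, fun m n hmn => ?_⟩
  rcases hmn.lt_or_gt with h | h
  · exact hlt m n h
  · exact inter_comm (B n) (B m) ▸ hlt n m h

lemma disjointed_mem_of_pairwise_finite_inter {α : Type*} {B : ℕ → Set α}
    (hB : Pairwise fun m n => (B m ∩ B n).Finite) {F : Filter α} (hF : F ≤ cofinite) {n : ℕ}
    (hn : B n ∈ F) : disjointed B n ∈ F := by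
  have hfin : (⋃ m ∈ Iio n, B m ∩ B n).Finite :=
    (finite_Iio n).biUnion fun m hm => hB (ne_of_lt hm)
  refine mem_of_superset (inter_mem hn (hF hfin.compl_mem_cofinite)) ?_
  rintro x ⟨hxn, hx⟩
  rw [disjointed_eq_inter_compl]
  exact ⟨hxn, mem_iInter₂.2 fun m hm hxm => hx (mem_biUnion hm ⟨hxm, hxn⟩)⟩

lemma rkIso_pure (a b : ℕ) : RKIso (pure a) (pure b) :=
  ⟨Equiv.swap a b, by rw [Ultrafilter.map_pure, Equiv.swap_apply_left]⟩

lemma subsingleton_setOf_not_le_cofinite {V : ℕ → Ultrafilter ℕ}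
    (hVV : ∀ m n, m ≠ n → ¬ RKIso (V m) (V n)) :
    {n | ¬ (V n : Filter ℕ) ≤ cofinite}.Subsingleton := by
  intro m hm n hn
  by_contra hmn
  obtain ⟨a, ha⟩ := (V m).le_cofinite_or_eq_pure.resolve_left hm
  obtain ⟨b, hb⟩ := (V n).le_cofinite_or_eq_pure.resolve_left hn
  exact hVV m n hmn (ha ▸ hb ▸ rkIso_pure a b)

theorem stmt1_general (U : Ultrafilter ℕ) (V : ℕ → Ultrafilter ℕ)
    (hVsel : ∀ n, IsSelective (V n))
    (hVV : ∀ m n, m ≠ n → ¬ RKIso (V m) (V n)) :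
    ∃ X ∈ sumUF U V, Set.InjOn Prod.snd X := by
  rcases U.le_cofinite_or_eq_pure with hU | ⟨a, rfl⟩
  · have hne : Pairwise fun m n => V m ≠ V n := fun m n hmn hVmn =>
      hVV m n hmn ⟨Equiv.refl ℕ, by rw [Equiv.coe_refl, Ultrafilter.map_id, hVmn]⟩
    obtain ⟨B, hBV, hB⟩ := exists_pairwise_finite_inter (fun n => (hVsel n).isPPoint) hne
    have hI : {n | (V n : Filter ℕ) ≤ cofinite} ∈ U :=
      hU (subsingleton_setOf_not_le_cofinite hVV).finite
    exact exists_mem_sumUF_injOn_snd hI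
      (fun n hn => disjointed_mem_of_pairwise_finite_inter hB hn (hBV n))
      ((disjoint_disjointed B).set_pairwise _)
  · exact exists_mem_sumUF_injOn_snd (C := fun _ => univ) (mem_singleton a)
      (fun _ _ => univ_mem) (pairwiseDisjoint_singleton _ _)

theorem stmt1 (U : Ultrafilter ℕ) (V : ℕ → Ultrafilter ℕ)
    (hUsel : IsSelective U) (hVsel : ∀ n, IsSelective (V n))
    (hUV : ∀ n, ¬ RKIso U (V n))
    (hVV : ∀ m n, m ≠ n → ¬ RKIso (V m) (V n)) :
    ∃ X ∈ sumUF U V, Set.InjOn Prod.snd X :=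
  stmt1_general U V hVsel hVV
end

section
/- Let W be a non-principal ultrafilter on ℕ and let f : ℕ → ℕ be a function that is neither finite-to-one nor constant on any set in W. Then for every n ≥ 1, every set A ∈ W, and every n-type τ, there is an n-element subset of A that realizes τ with respect to f. -/
/-- An `n`-type: a linear preorder (total preorder) on the `2n` variables
`x_1,…,x_n` (coded `Sum.inl i`) and `y_1,…,y_n` (coded `Sum.inr i`) such that
the `y_i` occur strictly in increasing order of subscripts, no `y_i` is
equivalent to any other variable (equality signs occur only between `x`'s),
and each `x_i` strictly precedes the corresponding `y_i`. -/
structure NType (n : ℕ) where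
  le : Fin n ⊕ Fin n → Fin n ⊕ Fin n → Prop
  refl : ∀ a, le a a
  trans : ∀ a b c, le a b → le b c → le a c
  total : ∀ a b, le a b ∨ le b a
  y_strict : ∀ i j : Fin n, i < j → le (Sum.inr i) (Sum.inr j) ∧ ¬ le (Sum.inr j) (Sum.inr i)
  y_alone : ∀ (i : Fin n) (v), le (Sum.inr i) v → le v (Sum.inr i) → v = Sum.inr i
  x_before_y : ∀ i : Fin n, le (Sum.inl i) (Sum.inr i) ∧ ¬ le (Sum.inr i) (Sum.inl i)

/-- `T n` is the number of `n`-types. -/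
noncomputable def T (n : ℕ) : ℕ := Nat.card (NType n)

/-!
Rank each variable by the number of variables strictly below it in `τ`, and assign strictly
increasing numbers `g 0 < g 1 < ⋯` to the ranks, one rank at a time. At the rank of `y_i` take an
element of `A` in the fibre of `f` over the number at the (lower) rank of `x_i`; at every other
rank take a number whose fibre in `A` is infinite, so that the later `y`'s can be found. Such
numbers exist above any bound: `f` is constant on no set of `W`, so it tends to infinity along
`W`, and it has an infinite fibre on every set of `W`. Then `a_i := g (rank of y_i)` realizes `τ`.
-/

open Filter Set

theorem Ultrafilter.tendsto_atTop_of_forall_not_const {α : Type*} (W : Ultrafilter α)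
    {f : α → ℕ} (hconst : ∀ A ∈ W, ¬ ∃ c, ∀ a ∈ A, f a = c) : Tendsto f W atTop := by
  rcases (W.map f).le_cofinite_or_eq_pure with h | ⟨c, hc⟩
  · exact Nat.cofinite_eq_atTop ▸ h
  · have : f ⁻¹' {c} ∈ W := by
      rw [← Ultrafilter.mem_map, hc]
      exact mem_pure.mpr rfl
    exact (hconst _ this ⟨c, fun a ha => ha⟩).elim

theorem Ultrafilter.exists_infinite_fiber_gt {α : Type*} (W : Ultrafilter α) {f : α → ℕ}
    (hfin : ∀ A ∈ W, ¬ ∀ k, {a ∈ A | f a = k}.Finite)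
    (hconst : ∀ A ∈ W, ¬ ∃ c, ∀ a ∈ A, f a = c) {A : Set α} (hA : A ∈ W) (M : ℕ) :
    ∃ k, M < k ∧ {a ∈ A | f a = k}.Infinite := by
  have hB : A ∩ {a | M < f a} ∈ W :=
    inter_mem hA ((W.tendsto_atTop_of_forall_not_const hconst).eventually_gt_atTop M)
  obtain ⟨k, hk⟩ := not_forall.mp (hfin _ hB)
  obtain ⟨a, ⟨-, hMa⟩, rfl⟩ := Set.not_finite.mp hk |>.nonempty
  exact ⟨f a, hMa, (Set.not_finite.mp hk).mono fun b hb => ⟨hb.1.1, hb.2⟩⟩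

section RelRank

variable {α : Type*}

noncomputable def relRank (r : α → α → Prop) (a : α) : ℕ := {b | r b a ∧ ¬ r a b}.ncard

variable {r : α → α → Prop}

theorem setOf_strictRel_subset [IsTrans α r] {a b : α} (h : r a b) :
    {c | r c a ∧ ¬ r a c} ⊆ {c | r c b ∧ ¬ r b c} :=
  fun _ hc => ⟨_root_.trans hc.1 h, fun hbc => hc.2 (_root_.trans h hbc)⟩

theorem relRank_le_relRank_iff [Finite α] [IsTrans α r] [Std.Total r] {a b : α} :
    relRank r a ≤ relRank r b ↔ r a b := by
  refine ⟨fun h => ?_, fun h => ncard_le_ncard (setOf_strictRel_subset h) (toFinite _)⟩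
  by_contra hab
  have hba : r b a := (total_of r a b).resolve_left hab
  have hss : {c | r c b ∧ ¬ r b c} ⊂ {c | r c a ∧ ¬ r a c} :=
    (ssubset_iff_of_subset (setOf_strictRel_subset hba)).mpr
      ⟨b, ⟨hba, hab⟩, fun hb => hb.2 (refl_of r b)⟩
  exact (ncard_lt_ncard hss (toFinite _)).not_ge h

theorem relRank_lt_card [Finite α] [Std.Refl r] (a : α) : relRank r a < Nat.card α :=
  ncard_lt_card (ne_univ_iff_exists_notMem _ |>.mpr ⟨a, fun ha => ha.2 (refl_of r a)⟩)

end RelRank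

namespace NType

open Sum

variable {n : ℕ} (τ : NType n)

instance : IsTrans (Fin n ⊕ Fin n) τ.le := ⟨τ.trans⟩

instance : Std.Total τ.le := ⟨τ.total⟩

noncomputable abbrev rank : Fin n ⊕ Fin n → ℕ := relRank τ.le

theorem rank_le_rank_iff {v w : Fin n ⊕ Fin n} : τ.rank v ≤ τ.rank w ↔ τ.le v w :=
  relRank_le_relRank_iff

theorem eq_inr_of_rank_eq {i : Fin n} {v : Fin n ⊕ Fin n} (h : τ.rank v = τ.rank (inr i)) :
    v = inr i :=
  τ.y_alone i v (τ.rank_le_rank_iff.mp h.ge) (τ.rank_le_rank_iff.mp h.le)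

theorem rank_inl_lt_rank_inr (i : Fin n) : τ.rank (inl i) < τ.rank (inr i) :=
  lt_of_not_ge fun h => (τ.x_before_y i).2 (τ.rank_le_rank_iff.mp h)

theorem rank_inr_strictMono : StrictMono fun i => τ.rank (inr i) := fun i j hij =>
  lt_of_le_of_ne (τ.rank_le_rank_iff.mpr (τ.y_strict i j hij).1)
    fun h => hij.ne (inr_injective (τ.eq_inr_of_rank_eq h))

/-- `g m` is the number assigned to rank `m` of `τ`, for the ranks `m < N`. -/
structure IsLevelAssignment (f : ℕ → ℕ) (A : Set ℕ) (N : ℕ) (g : ℕ → ℕ) : Prop where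
  strictMonoOn : StrictMonoOn g (Iio N)
  mem : ∀ i, τ.rank (inr i) < N → g (τ.rank (inr i)) ∈ A
  map_eq : ∀ i, τ.rank (inr i) < N → f (g (τ.rank (inr i))) = g (τ.rank (inl i))
  infinite_fiber : ∀ m < N, (∀ i, τ.rank (inr i) ≠ m) → {a ∈ A | f a = g m}.Infinite

variable {τ} {f : ℕ → ℕ} {A : Set ℕ}

theorem IsLevelAssignment.exists_next_value
    (hA : ∀ M, ∃ k, M < k ∧ {a ∈ A | f a = k}.Infinite) {N : ℕ} {g : ℕ → ℕ}
    (hg : τ.IsLevelAssignment f A N g) :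
    ∃ b, (∀ m < N, g m < b) ∧
      (∀ i, τ.rank (inr i) = N → b ∈ A ∧ f b = g (τ.rank (inl i))) ∧
      ((∀ i, τ.rank (inr i) ≠ N) → {a ∈ A | f a = b}.Infinite) := by
  have hsup {m} (hm : m < N) : g m ≤ (Finset.range N).sup g :=
    Finset.le_sup (Finset.mem_range.mpr hm)
  by_cases hy : ∃ i, τ.rank (inr i) = N
  · obtain ⟨i, rfl⟩ := hy
    have hfree : ∀ j, τ.rank (inr j) ≠ τ.rank (inl i) := fun j h =>
      inl_ne_inr (τ.eq_inr_of_rank_eq h.symm)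
    obtain ⟨b, ⟨hbA, hfb⟩, hb⟩ := (hg.infinite_fiber _ (τ.rank_inl_lt_rank_inr i) hfree).exists_gt
      ((Finset.range _).sup g)
    refine ⟨b, fun m hm => (hsup hm).trans_lt hb, fun j hj => ?_, fun h => (h i rfl).elim⟩
    obtain rfl := τ.rank_inr_strictMono.injective hj
    exact ⟨hbA, hfb⟩
  · obtain ⟨k, hk, hfib⟩ := hA ((Finset.range N).sup g)
    exact ⟨k, fun m hm => (hsup hm).trans_lt hk, fun i h => (hy ⟨i, h⟩).elim, fun _ => hfib⟩

theorem IsLevelAssignment.update {N : ℕ} {g : ℕ → ℕ} (hg : τ.IsLevelAssignment f A N g) {b : ℕ}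
    (hb_gt : ∀ m < N, g m < b)
    (hb_y : ∀ i, τ.rank (inr i) = N → b ∈ A ∧ f b = g (τ.rank (inl i)))
    (hb_free : (∀ i, τ.rank (inr i) ≠ N) → {a ∈ A | f a = b}.Infinite) :
    τ.IsLevelAssignment f A (N + 1) (Function.update g N b) := by
  have hlt {m} (hm : m < N) : Function.update g N b m = g m := Function.update_of_ne hm.ne _ _
  have hx {i} (hi : τ.rank (inr i) < N + 1) : Function.update g N b (τ.rank (inl i)) =
      g (τ.rank (inl i)) :=
    hlt ((τ.rank_inl_lt_rank_inr i).trans_le (Nat.lt_succ_iff.mp hi))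
  refine ⟨fun m₁ hm₁ m₂ hm₂ h => ?_, fun i hi => ?_, fun i hi => ?_, fun m hm hfree => ?_⟩
  · have hm₁N : m₁ < N := h.trans_le (Nat.lt_succ_iff.mp hm₂)
    rw [hlt hm₁N]
    rcases Nat.lt_succ_iff_lt_or_eq.mp hm₂ with hm₂N | rfl
    · rw [hlt hm₂N]
      exact hg.strictMonoOn hm₁N hm₂N h
    · rw [Function.update_self]
      exact hb_gt m₁ hm₁N
  · rcases Nat.lt_succ_iff_lt_or_eq.mp hi with hiN | hiN
    · rw [hlt hiN]
      exact hg.mem i hiN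
    · rw [hiN, Function.update_self]
      exact (hb_y i hiN).1
  · rw [hx hi]
    rcases Nat.lt_succ_iff_lt_or_eq.mp hi with hiN | hiN
    · rw [hlt hiN]
      exact hg.map_eq i hiN
    · rw [hiN, Function.update_self]
      exact (hb_y i hiN).2
  · rcases Nat.lt_succ_iff_lt_or_eq.mp hm with hmN | rfl
    · rw [hlt hmN]
      exact hg.infinite_fiber m hmN hfree
    · rw [Function.update_self]
      exact hb_free hfree

variable (τ) in
theorem exists_isLevelAssignment (hA : ∀ M, ∃ k, M < k ∧ {a ∈ A | f a = k}.Infinite) (N : ℕ) :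
    ∃ g, τ.IsLevelAssignment f A N g := by
  induction N with
  | zero => exact ⟨id, by simp [StrictMonoOn], by simp, by simp, by simp⟩
  | succ N ih =>
    obtain ⟨g, hg⟩ := ih
    obtain ⟨b, hb_gt, hb_y, hb_free⟩ := hg.exists_next_value hA
    exact ⟨_, hg.update hb_gt hb_y hb_free⟩

theorem IsLevelAssignment.exists_realizing {g : ℕ → ℕ}
    (hg : τ.IsLevelAssignment f A (Nat.card (Fin n ⊕ Fin n)) g) :
    ∃ a : Fin n → ℕ, StrictMono a ∧ (∀ i, a i ∈ A) ∧
      ∀ v w, τ.le v w ↔ Sum.elim (fun i => f (a i)) a v ≤ Sum.elim (fun i => f (a i)) a w := by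
  have hrank (v) : τ.rank v ∈ Iio (Nat.card (Fin n ⊕ Fin n)) := relRank_lt_card v
  have helim (v) : Sum.elim (fun i => f (g (τ.rank (inr i)))) (fun i => g (τ.rank (inr i))) v =
      g (τ.rank v) := by
    rcases v with i | i
    · exact hg.map_eq i (hrank _)
    · rfl
  refine ⟨fun i => g (τ.rank (inr i)),
    fun i j hij => hg.strictMonoOn (hrank _) (hrank _) (τ.rank_inr_strictMono hij),
    fun i => hg.mem i (hrank _), fun v w => ?_⟩
  rw [helim, helim, hg.strictMonoOn.le_iff_le (hrank v) (hrank w), τ.rank_le_rank_iff]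

end NType

theorem stmt5_general (W : Ultrafilter ℕ)
    (f : ℕ → ℕ)
    (hfin : ∀ A ∈ W, ¬ (∀ k, {a ∈ A | f a = k}.Finite))
    (hconst : ∀ A ∈ W, ¬ (∃ c, ∀ a ∈ A, f a = c)) :
    ∀ n : ℕ, 1 ≤ n → ∀ A ∈ W, ∀ τ : NType n,
      ∃ a : Fin n → ℕ, StrictMono a ∧ (∀ i, a i ∈ A) ∧
        ∀ v w, τ.le v w ↔
          Sum.elim (fun i => f (a i)) a v ≤ Sum.elim (fun i => f (a i)) a w := by
  intro n _ A hA τ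
  obtain ⟨g, hg⟩ := τ.exists_isLevelAssignment (W.exists_infinite_fiber_gt hfin hconst hA) _
  exact hg.exists_realizing

theorem stmt5 (W : Ultrafilter ℕ) (hW : ∀ A ∈ W, Set.Infinite A)
    (f : ℕ → ℕ)
    (hfin : ∀ A ∈ W, ¬ (∀ k, {a ∈ A | f a = k}.Finite))
    (hconst : ∀ A ∈ W, ¬ (∃ c, ∀ a ∈ A, f a = c)) :
    ∀ n : ℕ, 1 ≤ n → ∀ A ∈ W, ∀ τ : NType n,
      ∃ a : Fin n → ℕ, StrictMono a ∧ (∀ i, a i ∈ A) ∧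
        ∀ v w, τ.le v w ↔
          Sum.elim (fun i => f (a i)) a v ≤ Sum.elim (fun i => f (a i)) a w :=
  stmt5_general W f hfin hconst
end

section
/- Let n ≥ 2, let X ∈ (F⊗F)^+, and let the n-element subsets of X be partitioned into finitely many pieces. Then there is Y ⊆ X with Y ∈ (F⊗F)^+ such that every n-element subset of Y realizes an n-type and, for each n-type τ, all n-element subsets of Y realizing τ lie in the same piece of the partition. In particular, the n-element subsets of Y meet at most T(n) pieces of the partition. -/
/-- The `n`-th vertical section of `X ⊆ ℕ × ℕ`. -/
def sect (X : Set (ℕ × ℕ)) (n : ℕ) : Set ℕ := {m | (n, m) ∈ X}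

/-- Membership in the Fubini square `F ⊗ F` of the Fréchet filter: for all but
finitely many `n`, the vertical section `X(n)` is cofinite. -/
def MemFubini (X : Set (ℕ × ℕ)) : Prop := {n | ¬ (sect X n)ᶜ.Finite}.Finite

/-- The dual ideal `(F ⊗ F)*`: complements of members of `F ⊗ F`. -/
def FubiniStar (X : Set (ℕ × ℕ)) : Prop := MemFubini Xᶜ

/-- The coideal `(F ⊗ F)⁺`: sets not in the dual ideal, equivalently sets with
infinitely many infinite vertical sections. -/
def FubiniPlus (X : Set (ℕ × ℕ)) : Prop := ¬ FubiniStar X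

/-- A finite set `s` of pairs realizes the `n`-type `τ` if, listing its elements as
`(p_1,q_1),…,(p_n,q_n)` with `q_1 < … < q_n`, all equations and inequalities of `τ`
become true when `x_i` is interpreted as `p_i` and `y_i` as `q_i`. -/
def RealizesPair {n : ℕ} (τ : NType n) (s : Finset (ℕ × ℕ)) : Prop :=
  ∃ a : Fin n → ℕ × ℕ, (↑s : Set (ℕ × ℕ)) = Set.range a ∧
    StrictMono (fun i => (a i).2) ∧
    ∀ v w, τ.le v w ↔
      Sum.elim (fun i => (a i).1) (fun i => (a i).2) v ≤
        Sum.elim (fun i => (a i).1) (fun i => (a i).2) w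


/-!
Thin `X` to a grid: columns `A 0 < A 1 < ⋯` of `X`, and in column `A x`, for every `y ≥ x`, a
point `B x y` lying strictly between `A y` and `A (y + 1)`. Using even indices for columns and odd
indices for rows, the grid points form a set in `(F ⊗ F)⁺` on which both coordinates are given by a
single strictly increasing map, so the type of an `n`-set of grid points is the order type of its
`2n` indices. Ramsey's theorem for `2n`-tuples, applied to all index patterns at once, then thins
the grid so that the colour of an `n`-set depends only on this order type.
-/


theorem exists_homogeneous_of_step {κ : Type*} [Finite κ] {d : ℕ} {c : (Fin (d + 1) → ℕ) → κ}
    {F : Set ℕ → Set ℕ} {γ : Set ℕ → κ}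
    (hF : ∀ V : Set ℕ, V.Infinite → F V ⊆ V ∧ (F V).Infinite ∧ (∀ x ∈ F V, sInf V < x) ∧
      ∀ t : Fin d → ℕ, StrictMono t → (∀ i, t i ∈ F V) → c (Fin.cons (sInf V) t) = γ V)
    {S : Set ℕ} (hS : S.Infinite) :
    ∃ H ⊆ S, H.Infinite ∧ ∃ γ₀, ∀ e : Fin (d + 1) → ℕ, StrictMono e → (∀ i, e i ∈ H) →
      c e = γ₀ := by
  let W : ℕ → Set ℕ := fun i => F^[i] S
  have hW_succ : ∀ i, W (i + 1) = F (W i) := fun i => Function.iterate_succ_apply' F i S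
  have hW_inf : ∀ i, (W i).Infinite := by
    intro i
    induction i with
    | zero => exact hS
    | succ i ih => rw [hW_succ]; exact (hF _ ih).2.1
  have hW_anti : Antitone W :=
    antitone_nat_of_succ_le fun i => by rw [hW_succ]; exact (hF _ (hW_inf i)).1
  let a : ℕ → ℕ := fun i => sInf (W i)
  have ha_mem : ∀ i, a i ∈ W i := fun i => Nat.sInf_mem (hW_inf i).nonempty
  have ha : StrictMono a := strictMono_nat_of_lt_succ fun i =>
    (hF _ (hW_inf i)).2.2.1 _ (hW_succ i ▸ ha_mem (i + 1))
  obtain ⟨γ₀, hγ₀⟩ := Finite.exists_infinite_fiber fun i => γ (W i)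
  refine ⟨a '' ((fun i => γ (W i)) ⁻¹' {γ₀}), ?_, ?_, γ₀, ?_⟩
  · rintro _ ⟨i, -, rfl⟩
    exact hW_anti (Nat.zero_le i) (ha_mem i)
  · exact (Set.infinite_coe_iff.1 hγ₀).image ha.injective.injOn
  · intro e he heH
    obtain ⟨i, hi, hei⟩ := heH 0
    -- the later entries of `e` are terms `a j` with `j > i`, hence lie in `W (i + 1) = F (W i)`
    have htail : ∀ k, Fin.tail e k ∈ F (W i) := by
      intro k
      obtain ⟨j, -, hej⟩ := heH k.succ
      have hij : i < j := ha.lt_iff_lt.1 (by rw [hei, hej]; exact he (Fin.succ_pos k))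
      rw [← hW_succ, Fin.tail, ← hej]
      exact hW_anti hij (ha_mem j)
    rw [← Fin.cons_self_tail e, ← hei]
    exact ((hF _ (hW_inf i)).2.2.2 _ (he.comp Fin.strictMono_succ) htail).trans hi

theorem infinite_ramsey {κ : Type*} [Finite κ] (d : ℕ) :
    ∀ (c : (Fin d → ℕ) → κ) {S : Set ℕ}, S.Infinite →
      ∃ H ⊆ S, H.Infinite ∧ ∃ γ, ∀ e : Fin d → ℕ, StrictMono e → (∀ i, e i ∈ H) → c e = γ := by
  induction d with
  | zero =>
    exact fun c S hS => ⟨S, subset_rfl, hS, c Fin.elim0,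
      fun e _ _ => congrArg c (Subsingleton.elim _ _)⟩
  | succ d ih =>
    intro c S hS
    have : Nonempty κ := ⟨c 0⟩
    have step : ∀ V : Set ℕ, ∃ V' : Set ℕ, ∃ γ : κ, V.Infinite →
        V' ⊆ V ∧ V'.Infinite ∧ (∀ x ∈ V', sInf V < x) ∧
        ∀ t : Fin d → ℕ, StrictMono t → (∀ i, t i ∈ V') → c (Fin.cons (sInf V) t) = γ := by
      intro V
      by_cases hV : V.Infinite
      · obtain ⟨V', hV', hinf, γ, hγ⟩ :=
          ih (fun t => c (Fin.cons (sInf V) t)) (hV.sdiff (Set.finite_Iic (sInf V)))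
        exact ⟨V', γ, fun _ => ⟨fun x hx => (hV' hx).1, hinf,
          fun x hx => not_le.1 (hV' hx).2, hγ⟩⟩
      · exact ⟨∅, Classical.arbitrary κ, fun h => absurd h hV⟩
    choose F γ hF using step
    exact exists_homogeneous_of_step hF hS

theorem infinite_ramsey_strictMono {κ : Type*} [Finite κ] (d : ℕ) (c : (Fin d → ℕ) → κ) :
    ∃ u : ℕ → ℕ, StrictMono u ∧ ∃ γ, ∀ e : Fin d → ℕ, StrictMono e → c (u ∘ e) = γ := by
  obtain ⟨H, -, hH, γ, hγ⟩ := infinite_ramsey d c Set.infinite_univ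
  exact ⟨Nat.nth (· ∈ H), Nat.nth_strictMono hH, γ, fun e he =>
    hγ _ ((Nat.nth_strictMono hH).comp he) fun _ => Nat.nth_mem_of_infinite hH _⟩

theorem exists_strictMono_extend {k N : ℕ} (hkN : k ≤ N) {d : Fin k → ℕ} (hd : StrictMono d) :
    ∃ e : Fin N → ℕ, StrictMono e ∧ ∀ i, e (Fin.castLE hkN i) = d i := by
  have hdM : ∀ i, d i ≤ ∑ i, d i := fun i => Finset.single_le_sum (by simp) (Finset.mem_univ i)
  refine ⟨fun j => if h : (j : ℕ) < k then d ⟨j, h⟩ else (∑ i, d i) + j, ?_, fun i => by simp⟩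
  intro i j hij
  have hij' : (i : ℕ) < j := hij
  dsimp only
  split_ifs with hi hj hj
  · exact hd (Fin.mk_lt_mk.2 hij')
  · have := hdM ⟨i, hi⟩
    omega
  · omega
  · omega

theorem exists_comp_eq_of_le_iff_le {ι : Type*} [Fintype ι] {N : ℕ} (hN : Fintype.card ι ≤ N)
    {g g' : ι → ℕ} (h : ∀ v w, g v ≤ g w ↔ g' v ≤ g' w) :
    ∃ (f : ι → Fin N) (e e' : Fin N → ℕ),
      StrictMono e ∧ StrictMono e' ∧ g = e ∘ f ∧ g' = e' ∘ f := by
  classical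
  set D := Finset.univ.image g
  have hk : D.card ≤ N := Finset.card_image_le.trans hN
  let d := D.orderEmbOfFin rfl
  let f₀ : ι → Fin D.card := fun v =>
    (D.orderIsoOfFin rfl).symm ⟨g v, Finset.mem_image_of_mem g (Finset.mem_univ v)⟩
  have hf₀ : ∀ v, d (f₀ v) = g v := fun v => by
    rw [← Finset.coe_orderIsoOfFin_apply, OrderIso.apply_symm_apply]
  have hd_mem : ∀ i, ∃ v, g v = d i := fun i => by
    simpa [D] using (Finset.mem_image.1 (D.orderEmbOfFin_mem rfl i))
  choose σ hσ using hd_mem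
  have hd' : StrictMono (g' ∘ σ) := fun i j hij => by
    have := d.strictMono hij
    rw [← hσ i, ← hσ j] at this
    exact lt_of_not_ge fun hle => ((h _ _).2 hle).not_gt this
  have hσf₀ : ∀ v, g' (σ (f₀ v)) = g' v := fun v => by
    have hg : g (σ (f₀ v)) = g v := (hσ _).trans (hf₀ v)
    exact le_antisymm ((h _ _).1 hg.le) ((h _ _).1 hg.ge)
  obtain ⟨e, he, hed⟩ := exists_strictMono_extend hk d.strictMono
  obtain ⟨e', he', hed'⟩ := exists_strictMono_extend hk hd'
  exact ⟨Fin.castLE hk ∘ f₀, e, e', he, he', funext fun v => by simp [hed, hf₀],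
    funext fun v => by simp [hed', hσf₀]⟩

theorem fubiniPlus_iff {X : Set (ℕ × ℕ)} : FubiniPlus X ↔ {a | (sect X a).Infinite}.Infinite := by
  have hsect : ∀ a, (sect Xᶜ a)ᶜ = sect X a := fun a => by ext; simp [sect]
  simp only [FubiniPlus, FubiniStar, MemFubini, hsect]
  rfl

structure IsGrid (X : Set (ℕ × ℕ)) (A : ℕ → ℕ) (B : ℕ → ℕ → ℕ) : Prop where
  strictMono : StrictMono A
  mem : ∀ x y, (A x, B x y) ∈ X
  lt_B : ∀ x y, A y < B x y
  B_lt : ∀ ⦃x y⦄, x ≤ y → B x y < A (y + 1)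

theorem exists_isGrid {X : Set (ℕ × ℕ)} (hX : FubiniPlus X) : ∃ A B, IsGrid X A B := by
  choose col hcol_mem hcol_gt using (fubiniPlus_iff.1 hX).exists_gt
  have hnext : ∀ a b : ℕ, ∃ v, b < v ∧ ((sect X a).Infinite → (a, v) ∈ X) := fun a b => by
    by_cases ha : (sect X a).Infinite
    · obtain ⟨v, hv, hbv⟩ := ha.exists_gt b
      exact ⟨v, hbv, fun _ => hv⟩
    · exact ⟨b + 1, b.lt_succ_self, fun h => absurd h ha⟩
  choose next hnext_gt hnext_mem using hnext
  -- once the columns up to `b` are fixed, the next column is taken beyond every `next a b`, `a ≤ b`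
  let bound : ℕ → ℕ := fun b => ∑ a ∈ Finset.range (b + 1), next a b
  have hnext_le : ∀ a b, a ≤ b → next a b ≤ bound b := fun a b hab =>
    Finset.single_le_sum (f := fun a => next a b) (fun _ _ => Nat.zero_le _)
      (Finset.mem_range.2 (Nat.lt_succ_of_le hab))
  let A : ℕ → ℕ := fun y => Nat.rec (col 0) (fun _ b => col (bound b)) y
  have hA_mem : ∀ y, (sect X (A y)).Infinite := by
    intro y
    cases y <;> exact hcol_mem _
  have hA : StrictMono A := strictMono_nat_of_lt_succ fun y =>
    calc A y < next (A y) (A y) := hnext_gt _ _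
      _ ≤ bound (A y) := hnext_le _ _ le_rfl
      _ < A (y + 1) := hcol_gt _
  exact ⟨A, fun x y => next (A x) (A y),
    { strictMono := hA
      mem := fun x y => hnext_mem _ _ (hA_mem x)
      lt_B := fun _ _ => hnext_gt _ _
      B_lt := fun x y hxy => (hnext_le _ _ (hA.monotone hxy)).trans_lt (hcol_gt _) }⟩

theorem IsGrid.comp {X : Set (ℕ × ℕ)} {A : ℕ → ℕ} {B : ℕ → ℕ → ℕ} (h : IsGrid X A B)
    {u : ℕ → ℕ} (hu : StrictMono u) : IsGrid X (A ∘ u) (fun x y => B (u x) (u y)) where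
  strictMono := h.strictMono.comp hu
  mem x y := h.mem (u x) (u y)
  lt_B x y := h.lt_B (u x) (u y)
  B_lt _ y hxy :=
    (h.B_lt (hu.monotone hxy)).trans_le (h.strictMono.monotone (hu (Nat.lt_succ_self y)))

/- Grid point `q` lies in column `2 * q.unpair.1` and row `2 * q + 1`: columns and rows never
share an index, a row determines its column, and column `2 * i` holds the rows of all
`Nat.pair i k`. -/

def xParam (q : ℕ) : ℕ := 2 * q.unpair.1

def yParam (q : ℕ) : ℕ := 2 * q + 1

theorem xParam_lt_yParam (q : ℕ) : xParam q < yParam q := by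
  have := Nat.unpair_left_le q
  simp only [xParam, yParam]
  omega

theorem xParam_ne_yParam (q q' : ℕ) : xParam q ≠ yParam q' := by
  simp only [xParam, yParam]
  omega

theorem yParam_strictMono : StrictMono yParam := fun q q' h => by
  simp only [yParam]
  omega

def gridCoord (A : ℕ → ℕ) (B : ℕ → ℕ → ℕ) (z : ℕ) : ℕ :=
  if Even z then A z else B (xParam (z / 2)) z

theorem gridCoord_xParam (A : ℕ → ℕ) (B : ℕ → ℕ → ℕ) (q : ℕ) :
    gridCoord A B (xParam q) = A (xParam q) := by
  simp [gridCoord, xParam]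

theorem gridCoord_yParam (A : ℕ → ℕ) (B : ℕ → ℕ → ℕ) (q : ℕ) :
    gridCoord A B (yParam q) = B (xParam q) (yParam q) := by
  simp [gridCoord, yParam, Nat.mul_add_div]

theorem IsGrid.gridCoord_strictMono {X : Set (ℕ × ℕ)} {A : ℕ → ℕ} {B : ℕ → ℕ → ℕ}
    (h : IsGrid X A B) : StrictMono (gridCoord A B) := by
  refine strictMono_nat_of_lt_succ fun z => ?_
  obtain ⟨q, rfl | rfl⟩ := Nat.even_or_odd' z
  · have hodd : 2 * q + 1 = yParam q := rfl
    rw [hodd, gridCoord_yParam, ← hodd]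
    simp only [gridCoord, even_two_mul, if_true]
    exact (h.strictMono (Nat.lt_succ_self _)).trans (h.lt_B _ _)
  · have hodd : 2 * q + 1 = yParam q := rfl
    rw [hodd, gridCoord_yParam]
    simp only [gridCoord, show yParam q + 1 = 2 * (q + 1) by simp [yParam]; ring, even_two_mul,
      if_true]
    exact h.B_lt (xParam_lt_yParam q).le

theorem exists_realizesPair_of_range_eq {n : ℕ} {s : Finset (ℕ × ℕ)} (a : Fin n → ℕ × ℕ)
    (hs : (↑s : Set (ℕ × ℕ)) = Set.range a) (hsnd : StrictMono fun i => (a i).2)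
    (hne : ∀ i j, (a i).1 ≠ (a j).2) (hlt : ∀ i, (a i).1 < (a i).2) :
    ∃ τ : NType n, RealizesPair τ s := by
  let φ := Sum.elim (fun i => (a i).1) (fun i => (a i).2)
  refine ⟨{ le := fun v w => φ v ≤ φ w
            refl := fun _ => le_rfl
            trans := fun _ _ _ => le_trans
            total := fun _ _ => le_total _ _
            y_strict := fun i j hij => ⟨(hsnd hij).le, not_le.2 (hsnd hij)⟩
            y_alone := fun i v h₁ h₂ => ?_
            x_before_y := fun i => ⟨(hlt i).le, not_le.2 (hlt i)⟩ },
    a, hs, hsnd, fun _ _ => Iff.rfl⟩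
  have hφ : φ v = (a i).2 := le_antisymm h₂ h₁
  cases v with
  | inl j => exact absurd hφ (hne j i)
  | inr j => exact congrArg Sum.inr (hsnd.injective hφ)

theorem exists_strictMono_range_eq {α : Type*} {p : ℕ → α} (hp : Function.Injective p)
    {s : Finset α} (hs : ↑s ⊆ Set.range p) :
    ∃ q : Fin s.card → ℕ, StrictMono q ∧ (↑s : Set α) = Set.range (p ∘ q) := by
  classical
  let Q := s.preimage p hp.injOn
  have hQ : Q.image p = s := by
    rw [Finset.image_preimage, Finset.filter_true_of_mem fun x hx => hs hx]
  have hcard : Q.card = s.card := by rw [← hQ, Finset.card_image_of_injective _ hp]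
  refine ⟨Q.orderEmbOfFin hcard, (Q.orderEmbOfFin hcard).strictMono, ?_⟩
  rw [Set.range_comp, Finset.range_orderEmbOfFin, ← Finset.coe_image, hQ]

section Grid

variable {A : ℕ → ℕ} {B : ℕ → ℕ → ℕ}

def gridPt (A : ℕ → ℕ) (B : ℕ → ℕ → ℕ) (q : ℕ) : ℕ × ℕ :=
  (A (xParam q), B (xParam q) (yParam q))

def gridSet (A : ℕ → ℕ) (B : ℕ → ℕ → ℕ) : Set (ℕ × ℕ) := Set.range (gridPt A B)

def gridFinset {n : ℕ} (A : ℕ → ℕ) (B : ℕ → ℕ → ℕ) (g : Fin n ⊕ Fin n → ℕ) : Finset (ℕ × ℕ) :=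
  Finset.univ.image fun j => (A (g (Sum.inl j)), B (g (Sum.inl j)) (g (Sum.inr j)))

def gridParams {n : ℕ} (q : Fin n → ℕ) : Fin n ⊕ Fin n → ℕ :=
  Sum.elim (fun j => xParam (q j)) (fun j => yParam (q j))

theorem gridPt_eq (q : ℕ) :
    gridPt A B q = (gridCoord A B (xParam q), gridCoord A B (yParam q)) := by
  rw [gridCoord_xParam, gridCoord_yParam, gridPt]

theorem IsGrid.gridSet_subset {X : Set (ℕ × ℕ)} (h : IsGrid X A B) : gridSet A B ⊆ X := by
  rintro _ ⟨q, rfl⟩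
  exact h.mem _ _

theorem gridPt_injective (hκ : StrictMono (gridCoord A B)) :
    Function.Injective (gridPt A B) := fun q q' h => by
  rw [gridPt_eq, gridPt_eq] at h
  exact yParam_strictMono.injective (hκ.injective (Prod.ext_iff.1 h).2)

theorem fubiniPlus_gridSet (hκ : StrictMono (gridCoord A B)) : FubiniPlus (gridSet A B) := by
  rw [fubiniPlus_iff]
  have hcol : Function.Injective fun i => gridCoord A B (2 * i) :=
    hκ.injective.comp (mul_right_injective₀ two_ne_zero)
  refine (Set.infinite_range_of_injective hcol).mono ?_
  rintro _ ⟨i, rfl⟩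
  have hrow : Function.Injective fun k => gridCoord A B (yParam (Nat.pair i k)) :=
    hκ.injective.comp (yParam_strictMono.injective.comp fun k k' h => (Nat.pair_eq_pair.1 h).2)
  refine (Set.infinite_range_of_injective hrow).mono ?_
  rintro _ ⟨k, rfl⟩
  refine ⟨Nat.pair i k, ?_⟩
  rw [gridPt_eq]
  simp [xParam]

theorem exists_realizesPair_of_subset_gridSet (hκ : StrictMono (gridCoord A B)) {n : ℕ}
    {s : Finset (ℕ × ℕ)} (hs : ↑s ⊆ gridSet A B) (hcard : s.card = n) :
    ∃ τ : NType n, RealizesPair τ s := by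
  subst hcard
  obtain ⟨q, hq, hsq⟩ := exists_strictMono_range_eq (gridPt_injective hκ) hs
  refine exists_realizesPair_of_range_eq _ hsq ?_ (fun i j => ?_) (fun i => ?_) <;>
    simp only [Function.comp_apply, gridPt_eq]
  · exact hκ.comp (yParam_strictMono.comp hq)
  · exact hκ.injective.ne (xParam_ne_yParam _ _)
  · exact hκ (xParam_lt_yParam _)

theorem exists_gridParams_of_realizesPair (hκ : StrictMono (gridCoord A B)) {n : ℕ}
    {τ : NType n} {s : Finset (ℕ × ℕ)} (hs : ↑s ⊆ gridSet A B) (hτ : RealizesPair τ s) :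
    ∃ q : Fin n → ℕ, s = gridFinset A B (gridParams q) ∧
      ∀ v w, τ.le v w ↔ gridParams q v ≤ gridParams q w := by
  obtain ⟨a, hsa, -, hτa⟩ := hτ
  have ha : ∀ j, ∃ q, gridPt A B q = a j := fun j => hs (hsa ▸ Set.mem_range_self j)
  choose q hq using ha
  have hcoord :
      Sum.elim (fun i => (a i).1) (fun i => (a i).2) = gridCoord A B ∘ gridParams q := by
    funext v
    cases v <;> simp [gridParams, ← hq, gridPt_eq]
  refine ⟨q, Finset.coe_injective ?_, fun v w => by rw [hτa, hcoord, Function.comp_apply,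
    Function.comp_apply, hκ.le_iff_le]⟩
  rw [hsa, gridFinset, Finset.coe_image, Finset.coe_univ, Set.image_univ]
  exact congrArg Set.range (funext fun j => (hq j).symm)

theorem eq_of_realizesPair (hκ : StrictMono (gridCoord A B)) {n : ℕ} {β : Type*}
    {c : Finset (ℕ × ℕ) → β} {γ : (Fin n ⊕ Fin n → Fin (n + n)) → β}
    (hγ : ∀ e : Fin (n + n) → ℕ, StrictMono e → ∀ f, c (gridFinset A B (e ∘ f)) = γ f)
    {τ : NType n} {s t : Finset (ℕ × ℕ)} (hs : ↑s ⊆ gridSet A B) (ht : ↑t ⊆ gridSet A B)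
    (hsτ : RealizesPair τ s) (htτ : RealizesPair τ t) : c s = c t := by
  obtain ⟨q, rfl, hq⟩ := exists_gridParams_of_realizesPair hκ hs hsτ
  obtain ⟨q', rfl, hq'⟩ := exists_gridParams_of_realizesPair hκ ht htτ
  obtain ⟨f, e, e', he, he', hef, hef'⟩ :=
    exists_comp_eq_of_le_iff_le (N := n + n) (by simp) fun v w => (hq v w).symm.trans (hq' v w)
  rw [hef, hef', hγ e he, hγ e' he']

end Grid

instance (n : ℕ) : Finite (NType n) :=
  Finite.of_injective NType.le fun τ τ' h => by
    cases τ
    cases τ'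
    cases h
    rfl

theorem ncard_setOf_exists_le_card {α β ι : Type*} [Finite ι] {P Q : α → Prop} (c : α → β)
    (R : ι → α → Prop) (hR : ∀ s, P s → Q s → ∃ i, R i s)
    (hc : ∀ i s t, P s → P t → Q s → Q t → R i s → R i t → c s = c t) :
    {j | ∃ s, P s ∧ Q s ∧ c s = j}.ncard ≤ Nat.card ι := by
  have hex : ∀ j : {j | ∃ s, P s ∧ Q s ∧ c s = j}, ∃ i s, P s ∧ Q s ∧ c s = j ∧ R i s := by
    rintro ⟨j, s, hP, hQ, rfl⟩
    obtain ⟨i, hi⟩ := hR s hP hQ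
    exact ⟨i, s, hP, hQ, rfl, hi⟩
  choose i s hP hQ hs hRs using hex
  rw [← Nat.card_coe_set_eq]
  refine Nat.card_le_card_of_injective i fun j j' hj => Subtype.ext ?_
  rw [← hs, ← hs, hc _ _ _ (hP j) (hP j') (hQ j) (hQ j') (hRs j) (hj ▸ hRs j')]

theorem stmt9_general (n : ℕ) (X : Set (ℕ × ℕ)) (hX : FubiniPlus X)
    (m : ℕ) (c : Finset (ℕ × ℕ) → Fin m) :
    ∃ Y : Set (ℕ × ℕ), Y ⊆ X ∧ FubiniPlus Y ∧
      (∀ s : Finset (ℕ × ℕ), ↑s ⊆ Y → s.card = n → ∃ τ : NType n, RealizesPair τ s) ∧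
      (∀ (τ : NType n) (s t : Finset (ℕ × ℕ)), ↑s ⊆ Y → ↑t ⊆ Y →
        s.card = n → t.card = n → RealizesPair τ s → RealizesPair τ t → c s = c t) ∧
      {j : Fin m | ∃ s : Finset (ℕ × ℕ), ↑s ⊆ Y ∧ s.card = n ∧ c s = j}.ncard ≤ T n := by
  obtain ⟨A, B, hgrid⟩ := exists_isGrid hX
  obtain ⟨u, hu, γ, hγ⟩ :=
    infinite_ramsey_strictMono (n + n) fun e (f : Fin n ⊕ Fin n → Fin (n + n)) =>
      c (gridFinset A B (e ∘ f))
  set A' := A ∘ u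
  set B' := fun x y => B (u x) (u y)
  have hgrid' : IsGrid X A' B' := hgrid.comp hu
  have hκ := hgrid'.gridCoord_strictMono
  have hexists : ∀ s : Finset (ℕ × ℕ), ↑s ⊆ gridSet A' B' → s.card = n →
      ∃ τ : NType n, RealizesPair τ s := fun s hs hcard =>
    exists_realizesPair_of_subset_gridSet hκ hs hcard
  have hhom : ∀ (τ : NType n) (s t : Finset (ℕ × ℕ)), ↑s ⊆ gridSet A' B' → ↑t ⊆ gridSet A' B' →
      s.card = n → t.card = n → RealizesPair τ s → RealizesPair τ t → c s = c t :=
    fun τ s t hs ht _ _ hsτ htτ =>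
      eq_of_realizesPair hκ (fun e he f => congrFun (hγ e he) f) hs ht hsτ htτ
  exact ⟨_, hgrid'.gridSet_subset, fubiniPlus_gridSet hκ, hexists, hhom,
    ncard_setOf_exists_le_card c RealizesPair hexists hhom⟩

theorem stmt9 (n : ℕ) (hn : 2 ≤ n) (X : Set (ℕ × ℕ)) (hX : FubiniPlus X)
    (m : ℕ) (c : Finset (ℕ × ℕ) → Fin m) :
    ∃ Y : Set (ℕ × ℕ), Y ⊆ X ∧ FubiniPlus Y ∧
      (∀ s : Finset (ℕ × ℕ), ↑s ⊆ Y → s.card = n → ∃ τ : NType n, RealizesPair τ s) ∧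
      (∀ (τ : NType n) (s t : Finset (ℕ × ℕ)), ↑s ⊆ Y → ↑t ⊆ Y →
        s.card = n → t.card = n → RealizesPair τ s → RealizesPair τ t → c s = c t) ∧
      {j : Fin m | ∃ s : Finset (ℕ × ℕ), ↑s ⊆ Y ∧ s.card = n ∧ c s = j}.ncard ≤ T n :=
  stmt9_general n X hX m c
end

section
/- Let (X_n)_{n∈ℕ} be ultrafilters on ℕ×ℕ such that for each n the image of X_n under π₁ is a non-principal ultrafilter on ℕ, and such that for each n there is f_n : ℕ → ℕ with {(x,y) ∈ ℕ×ℕ : y ≤ f_n(x)} ∈ X_n. Then there exists g : ℕ → ℕ such that the set A = {(x,y) ∈ ℕ×ℕ : y > g(x)} belongs to the filter F⊗F and A ∉ X_n for every n. -/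
/-!
Diagonalize: `g x = max_{k ≤ x} f_k x`. Since `π₁(X_n)` is non-principal, `X_n` concentrates on
`{x ≥ n}`, where `g` dominates `f_n`, so `X_n` contains `{y ≤ g x}`. Any set lying above the graph
of a function has finite complementary sections and so belongs to `F ⊗ F`.
-/

open Filter

theorem Ultrafilter.le_cofinite_of_forall_infinite {α : Type*} (u : Ultrafilter α)
    (h : ∀ s ∈ u, s.Infinite) : (u : Filter α) ≤ cofinite := fun _ hs =>
  by_contra fun hns => h _ (u.compl_mem_iff_notMem.2 hns) (mem_cofinite.1 hs)

theorem Ultrafilter.tendsto_atTop_of_forall_infinite {α : Type*} (u : Ultrafilter α) (m : α → ℕ)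
    (h : ∀ s ∈ u.map m, s.Infinite) : Tendsto m u atTop := by
  rw [← Nat.cofinite_eq_atTop, Tendsto, ← Ultrafilter.coe_map]
  exact (u.map m).le_cofinite_of_forall_infinite h

theorem memFubini_lt_comp_fst (g : ℕ → ℕ) : MemFubini {p : ℕ × ℕ | g p.1 < p.2} :=
  Set.finite_empty.subset fun n hn =>
    hn <| (Set.finite_Iic (g n)).subset fun _ hm => Set.mem_Iic.2 (not_lt.1 hm)

def diagSup (f : ℕ → ℕ → ℕ) (x : ℕ) : ℕ := (Finset.range (x + 1)).sup (f · x)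

theorem le_diagSup (f : ℕ → ℕ → ℕ) {n x : ℕ} (h : n ≤ x) : f n x ≤ diagSup f x :=
  Finset.le_sup (f := (f · x)) (Finset.mem_range_succ_iff.2 h)

theorem stmt14 (X : ℕ → Ultrafilter (ℕ × ℕ))
    (h1 : ∀ n, ∀ s ∈ Ultrafilter.map Prod.fst (X n), Set.Infinite s)
    (h2 : ∀ n, ∃ f : ℕ → ℕ, {p : ℕ × ℕ | p.2 ≤ f p.1} ∈ X n) :
    ∃ g : ℕ → ℕ, MemFubini {p : ℕ × ℕ | g p.1 < p.2} ∧
      ∀ n, {p : ℕ × ℕ | g p.1 < p.2} ∉ X n := by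
  choose f hf using h2
  refine ⟨diagSup f, memFubini_lt_comp_fst _, fun n hA => ?_⟩
  have hfar : ∀ᶠ p in (X n : Filter (ℕ × ℕ)), n ≤ p.1 :=
    ((X n).tendsto_atTop_of_forall_infinite Prod.fst (h1 n)).eventually_ge_atTop n
  have hbelow : ∀ᶠ p in (X n : Filter (ℕ × ℕ)), p.2 ≤ diagSup f p.1 :=
    (hfar.and (hf n)).mono fun _ ⟨hn, hp⟩ => hp.trans (le_diagSup f hn)
  obtain ⟨p, hle, hlt⟩ := (hbelow.and hA).exists
  exact (not_lt.2 hle) hlt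
end

section
/- Let U be an ultrafilter on ℕ, regarded as the directed set (U, ⊇). If there is a Tukey map from ([ω₁]^{<ω}, ⊆) to (U, ⊇), then there is a monotone convergent map f : (U, ⊇) → ([ω₁]^{<ω}, ⊆) witnessing this reduction; that is, a map f such that u ⊇ v implies f(u) ⊆ f(v) for all u, v ∈ U, and the range of f is cofinal in ([ω₁]^{<ω}, ⊆). -/
/-- The first uncountable cardinal `ω₁`, as the type of ordinals below `ω₁`. -/
def Omega1 : Type 1 := {o : Ordinal.{0} // o < (Cardinal.aleph 1).ord}

/-!
A Tukey map `g` can put a given `u ∈ U` below `g {α}` for only finitely many `α`: otherwise these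
infinitely many singletons would form an unbounded family with the common bound `u`. Hence
`f u = {α | u ⊆ g {α}}` is a finite set; it grows as `u` shrinks, and it contains any finite `t`
once `u = ⋂ α ∈ t, g {α}`.
-/

open Filter

variable {α β : Type*}

/-- `g : (Finset α, ⊆) → (F, ⊇)` is Tukey; a family is bounded in `(F, ⊇)` when some `u ∈ F` is
contained in all its members. -/
def IsTukeyMap {F : Filter β} (g : Finset α → {A : Set β // A ∈ F}) : Prop :=
  ∀ S : Set (Finset α), (¬ ∃ t : Finset α, ∀ s ∈ S, s ⊆ t) → ¬ ∃ u ∈ F, ∀ s ∈ S, u ⊆ (g s).1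

namespace IsTukeyMap

variable {F : Filter β} {g : Finset α → {A : Set β // A ∈ F}}

theorem finite_setOf_subset_singleton (hg : IsTukeyMap g) {u : Set β} (hu : u ∈ F) :
    {a | u ⊆ (g {a}).1}.Finite := by
  by_contra hinf
  refine hg ((fun a => {a}) '' {a | u ⊆ (g {a}).1}) ?_ ⟨u, hu, ?_⟩
  · rintro ⟨t, ht⟩
    exact hinf (t.finite_toSet.subset fun a ha => by simpa using ht {a} ⟨a, ha, rfl⟩)
  · rintro _ ⟨a, ha, rfl⟩
    exact ha

noncomputable def dual (hg : IsTukeyMap g) (u : {A : Set β // A ∈ F}) : Finset α :=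
  (hg.finite_setOf_subset_singleton u.2).toFinset

theorem mem_dual (hg : IsTukeyMap g) {u : {A : Set β // A ∈ F}} {a : α} :
    a ∈ hg.dual u ↔ u.1 ⊆ (g {a}).1 :=
  Set.Finite.mem_toFinset _

theorem dual_mono (hg : IsTukeyMap g) {u v : {A : Set β // A ∈ F}} (hvu : v.1 ⊆ u.1) :
    hg.dual u ⊆ hg.dual v := fun _ ha =>
  hg.mem_dual.2 (hvu.trans (hg.mem_dual.1 ha))

theorem exists_subset_dual (hg : IsTukeyMap g) (t : Finset α) :
    ∃ u : {A : Set β // A ∈ F}, t ⊆ hg.dual u :=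
  ⟨⟨⋂ a ∈ t, (g {a}).1, (biInter_finset_mem t).2 fun a _ => (g {a}).2⟩,
    fun _ ha => hg.mem_dual.2 (Set.biInter_subset_of_mem ha)⟩

end IsTukeyMap

theorem stmt15 (U : Ultrafilter ℕ)
    -- there is a Tukey map from `([ω₁]^{<ω}, ⊆)` to `(U, ⊇)`:
    (h : ∃ g : Finset Omega1 → {A : Set ℕ // A ∈ U},
      ∀ S : Set (Finset Omega1),
        (¬ ∃ t : Finset Omega1, ∀ s ∈ S, s ⊆ t) →
        ¬ ∃ u : Set ℕ, u ∈ U ∧ ∀ s ∈ S, u ⊆ (g s).1) :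
    -- then there is a monotone map from `(U, ⊇)` to `([ω₁]^{<ω}, ⊆)` with cofinal range:
    ∃ f : {A : Set ℕ // A ∈ U} → Finset Omega1,
      (∀ u v : {A : Set ℕ // A ∈ U}, v.1 ⊆ u.1 → f u ⊆ f v) ∧
      (∀ t : Finset Omega1, ∃ u : {A : Set ℕ // A ∈ U}, t ⊆ f u) := by
  obtain ⟨g, hg⟩ := h
  have hg : IsTukeyMap (F := (U : Filter ℕ)) g := hg
  exact ⟨hg.dual, fun _ _ => hg.dual_mono, hg.exists_subset_dual⟩
end

section
/- If an ultrafilter U on a countable set X is basically generated, then there is no Tukey map from ([ω₁]^{<ω}, ⊆) to (U, ⊇); that is, [ω₁]^{<ω} is not Tukey reducible to U. -/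
/-- Pointwise (product-topology) convergence of a sequence of subsets of `X`,
identifying `𝒫(X)` with `2^X`. -/
def ConvergesTo {X : Type*} (b : ℕ → Set X) (c : Set X) : Prop :=
  ∀ x : X, ∃ N : ℕ, ∀ n, N ≤ n → (x ∈ b n ↔ x ∈ c)

/-- `B` witnesses that the ultrafilter `U` is basically generated: `B` is a base for `U`
and every sequence from `B` converging (in `2^X`) to a member of `B` has an infinite
subsequence whose intersection is in `U`. -/
def BasicallyGeneratedBy {X : Type*} (U : Ultrafilter X) (B : Set (Set X)) : Prop :=
  (∀ b ∈ B, b ∈ U) ∧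
  (∀ a ∈ U, ∃ b ∈ B, b ⊆ a) ∧
  (∀ (b : ℕ → Set X) (c : Set X), (∀ n, b n ∈ B) → c ∈ B → ConvergesTo b c →
    ∃ M : Set ℕ, M.Infinite ∧ (⋂ n ∈ M, b n) ∈ U)


open Filter Topology Set

instance : Uncountable Omega1 := by
  rw [← Cardinal.aleph0_lt_mk_iff]
  change Cardinal.aleph0 < Cardinal.mk (Iio (Cardinal.aleph 1).ord)
  rw [Cardinal.mk_Iio_ordinal, Cardinal.card_ord, ← Cardinal.lift_aleph0.{1, 0}, Cardinal.lift_lt]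
  exact Cardinal.aleph0_lt_aleph_one

theorem exists_forall_mem_nhds_not_countable_preimage {I Y : Type*} [Uncountable I]
    [TopologicalSpace Y] [SecondCountableTopology Y] (f : I → Y) :
    ∃ β, ∀ V ∈ 𝓝 (f β), ¬ (f ⁻¹' V).Countable := by
  obtain ⟨b, hbc, -, hb⟩ := TopologicalSpace.exists_countable_basis Y
  set K := ⋃ V ∈ {V ∈ b | (f ⁻¹' V).Countable}, f ⁻¹' V
  have hK : K.Countable := (hbc.mono (sep_subset _ _)).biUnion fun V hV => hV.2
  obtain ⟨β, hβ⟩ : Kᶜ.Nonempty := by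
    by_contra! h
    exact not_countable_univ (compl_empty_iff.1 h ▸ hK)
  refine ⟨β, fun W hW hWc => hβ ?_⟩
  obtain ⟨V, hVb, hβV, hVW⟩ := hb.mem_nhds_iff.1 hW
  exact mem_biUnion ⟨hVb, hWc.mono (preimage_mono hVW)⟩ hβV

theorem exists_injective_tendsto_of_forall_mem_nhds_infinite {I Y : Type*} [TopologicalSpace Y]
    [FirstCountableTopology Y] {f : I → Y} {y : Y} (h : ∀ V ∈ 𝓝 y, (f ⁻¹' V).Infinite) :
    ∃ α : ℕ → I, Function.Injective α ∧ Tendsto (f ∘ α) atTop (𝓝 y) := by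
  classical
  obtain ⟨V, hV⟩ := (𝓝 y).exists_antitone_basis
  -- carrying `k` along lets each new point come from a smaller `V k` than all earlier ones
  obtain ⟨p, hpV, hp⟩ := exists_seq_of_forall_finset_exists (fun p : ℕ × I => f p.2 ∈ V p.1)
      (fun p q => p.1 < q.1 ∧ p.2 ≠ q.2) fun s _ => by
    obtain ⟨i, hi, his⟩ := (h _ (hV.mem (s.sup Prod.fst + 1))).exists_notMem_finset
      (s.image Prod.snd)
    exact ⟨(s.sup Prod.fst + 1, i), hi, fun q hq =>
      ⟨Nat.lt_succ_of_le (Finset.le_sup hq), fun hqi => his (Finset.mem_image.2 ⟨q, hq, hqi⟩)⟩⟩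
  have hmono : StrictMono fun n => (p n).1 := fun m n hmn => (hp m n hmn).1
  refine ⟨fun n => (p n).2, fun m n hmn => ?_,
    hV.tendsto fun n => hV.antitone (hmono.id_le n) (hpV n)⟩
  by_contra hne
  rcases Nat.lt_or_gt_of_ne hne with hlt | hlt
  · exact (hp m n hlt).2 hmn
  · exact (hp n m hlt).2 hmn.symm

theorem convergesTo_of_tendsto_boolIndicator {X : Type*} {b : ℕ → Set X} {c : Set X}
    (h : Tendsto (fun n => (b n).boolIndicator) atTop (𝓝 c.boolIndicator)) :
    ConvergesTo b c := fun x => by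
  have hx := tendsto_pi_nhds.1 h x
  rw [nhds_discrete, tendsto_pure, eventually_atTop] at hx
  obtain ⟨N, hN⟩ := hx
  exact ⟨N, fun n hn => by rw [mem_iff_boolIndicator, mem_iff_boolIndicator, hN n hn]⟩

theorem exists_injective_convergesTo {X I : Type*} [Countable X] [Uncountable I] (c : I → Set X) :
    ∃ β, ∃ α : ℕ → I, Function.Injective α ∧ ConvergesTo (c ∘ α) (c β) := by
  obtain ⟨β, hβ⟩ := exists_forall_mem_nhds_not_countable_preimage fun i => (c i).boolIndicator
  obtain ⟨α, hα, hlim⟩ := exists_injective_tendsto_of_forall_mem_nhds_infinite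
    fun V hV hfin => hβ V hV hfin.countable
  exact ⟨β, α, hα, convergesTo_of_tendsto_boolIndicator hlim⟩

theorem BasicallyGeneratedBy.exists_infinite_biInter_mem {X I : Type*} [Countable X]
    [Uncountable I] {U : Ultrafilter X} {B : Set (Set X)} (hB : BasicallyGeneratedBy U B)
    {c : I → Set X} (hc : ∀ i, c i ∈ B) : ∃ s : Set I, s.Infinite ∧ (⋂ i ∈ s, c i) ∈ U := by
  obtain ⟨β, α, hα, hconv⟩ := exists_injective_convergesTo c
  obtain ⟨M, hM, hMU⟩ := hB.2.2 (c ∘ α) (c β) (fun n => hc _) (hc β) hconv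
  exact ⟨α '' M, hM.image hα.injOn, by rwa [biInter_image]⟩

theorem stmt17 {X : Type} [Countable X] (U : Ultrafilter X)
    (h : ∃ B : Set (Set X), BasicallyGeneratedBy U B) :
    -- there is no Tukey map from `([ω₁]^{<ω}, ⊆)` to `(U, ⊇)`:
    ¬ ∃ g : Finset Omega1 → {A : Set X // A ∈ U},
      ∀ S : Set (Finset Omega1),
        (¬ ∃ t : Finset Omega1, ∀ s ∈ S, s ⊆ t) →
        ¬ ∃ u : Set X, u ∈ U ∧ ∀ s ∈ S, u ⊆ (g s).1 := by
  obtain ⟨B, hB⟩ := h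
  rintro ⟨g, hg⟩
  choose c hcB hcg using fun α : Omega1 => hB.2.1 _ (g {α}).2
  obtain ⟨s, hs, hsU⟩ := hB.exists_infinite_biInter_mem hcB
  refine hg ((fun α => {α}) '' s) ?_ ⟨_, hsU, ?_⟩
  · rintro ⟨t, ht⟩
    exact hs (t.finite_toSet.subset fun α hα => by simpa using ht {α} ⟨α, hα, rfl⟩)
  · rintro _ ⟨α, hα, rfl⟩
    exact (biInter_subset_of_mem hα).trans (hcg α)
end
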